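/- Let V be a finite-dimensional real inner product space, p and q positive integers, and J : V → V a linear map with J ∘ J = p·J + q·id which is compatible with the inner product, i.e. ⟨JX, Y⟩ = ⟨X, JY⟩ for all X, Y ∈ V. Let D₁ and D₂ be mutually orthogonal subspaces of V, W = D₁ ⊕ D₂, and suppose D₁ is invariant, i.e. J(D₁) ⊆ D₁, and D₂ is slant with slant angle θ, i.e. ‖proj_{D₂}(JZ)‖ = cos θ · ‖JZ‖ for every Z ∈ D₂. Write P₂ for the orthogonal projection onto D₂, T for the orthogonal projection of J onto W (TX = proj_W(JX)), and N for the orthogonal projection of J onto W⊥ (NX = proj_{W⊥}(JX)). Then for all X, Y ∈ W: ⟨T(P₂X), T(P₂Y)⟩ = cos²θ · (p·⟨T(P₂X), P₂Y⟩ + q·⟨P₂X, P₂Y⟩) and ⟨NX, NY⟩ = sin²θ · (p·⟨T(P₂X), P₂Y⟩ + q·⟨P₂X, P₂Y⟩). -/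

import Mathlib

open scoped RealInnerProductSpace

/-!
Since `J` is symmetric and preserves `D₁`, it maps `D₂ ⊆ D₁ᗮ` into `D₁ᗮ`, so on `D₂` the
tangential part `T` is just `proj_{D₂} ∘ J`. Polarizing the slant condition then gives
`⟪TZ, TZ'⟫ = cos²θ ⟪JZ, JZ'⟫` on `D₂`, and the metallic identity with the symmetry of `J` gives
`⟪JZ, JZ'⟫ = p ⟪TZ, Z'⟫ + q ⟪Z, Z'⟫`. For the normal part, `N` kills `D₁` (as `J D₁ ⊆ D₁ ⊆ W`),
so `NX = N(P₂X)` on `W`, and Pythagoras for `J = T + N` gives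
`⟪NZ, NZ'⟫ = (1 - cos²θ) ⟪JZ, JZ'⟫`.
-/
namespace Submodule

variable {𝕜 E : Type*} [RCLike 𝕜] [NormedAddCommGroup E] [InnerProductSpace 𝕜 E]

theorem _root_.LinearMap.IsSymmetric.apply_mem_orthogonal {f : E →ₗ[𝕜] E} (hf : f.IsSymmetric)
    {K : Submodule 𝕜 E} (hK : ∀ x ∈ K, f x ∈ K) {x : E} (hx : x ∈ Kᗮ) : f x ∈ Kᗮ := by
  intro u hu
  rw [← hf u x]
  exact hx (f u) (hK u hu)

theorem starProjection_sup_of_mem_orthogonal {K L : Submodule 𝕜 E}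
    [(K ⊔ L).HasOrthogonalProjection] [L.HasOrthogonalProjection] (hKL : K ⟂ L) {v : E}
    (hv : v ∈ Kᗮ) : (K ⊔ L).starProjection v = L.starProjection v := by
  refine eq_starProjection_of_mem_orthogonal (mem_sup_right (starProjection_apply_mem L v)) ?_
  rw [← inf_orthogonal]
  exact ⟨Kᗮ.sub_mem hv (hKL.symm.le (starProjection_apply_mem L v)),
    sub_starProjection_mem_orthogonal v⟩

theorem sub_starProjection_mem_of_mem_sup {K L : Submodule 𝕜 E} [L.HasOrthogonalProjection]
    (hKL : K ⟂ L) {x : E} (hx : x ∈ K ⊔ L) : x - L.starProjection x ∈ K := by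
  obtain ⟨k, hk, l, hl, rfl⟩ := mem_sup.mp hx
  rw [map_add, (L.starProjection_apply_eq_zero_iff).mpr (hKL.le hk),
    starProjection_eq_self_iff.mpr hl, zero_add, add_sub_cancel_right]
  exact hk

theorem starProjection_orthogonal_sup_map_of_mem_sup {K L : Submodule 𝕜 E}
    [(K ⊔ L).HasOrthogonalProjection] [L.HasOrthogonalProjection] (hKL : K ⟂ L)
    {f : E →ₗ[𝕜] E} (hf : ∀ x ∈ K, f x ∈ K) {x : E} (hx : x ∈ K ⊔ L) :
    (K ⊔ L)ᗮ.starProjection (f x) = (K ⊔ L)ᗮ.starProjection (f (L.starProjection x)) := by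
  rw [← sub_eq_zero, ← map_sub, ← map_sub, starProjection_apply_eq_zero_iff]
  exact (K ⊔ L).le_orthogonal_orthogonal
    (mem_sup_left (hf _ (sub_starProjection_mem_of_mem_sup hKL hx)))

theorem inner_starProjection_starProjection (K : Submodule 𝕜 E) [K.HasOrthogonalProjection]
    (u v : E) :
    inner 𝕜 (K.starProjection u) (K.starProjection v) = inner 𝕜 u (K.starProjection v) := by
  rw [inner_starProjection_left_eq_right,
    starProjection_eq_self_iff.mpr (starProjection_apply_mem K v)]

theorem inner_starProjection_add_inner_starProjection_orthogonal (K : Submodule 𝕜 E)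
    [K.HasOrthogonalProjection] (u v : E) :
    inner 𝕜 (K.starProjection u) (K.starProjection v)
      + inner 𝕜 (Kᗮ.starProjection u) (Kᗮ.starProjection v) = inner 𝕜 u v := by
  rw [inner_starProjection_starProjection, inner_starProjection_starProjection, ← inner_add_right,
    starProjection_add_starProjection_orthogonal]

end Submodule

section Real

variable {V E F : Type*} [NormedAddCommGroup V] [InnerProductSpace ℝ V]
  [NormedAddCommGroup E] [InnerProductSpace ℝ E] [NormedAddCommGroup F] [InnerProductSpace ℝ F]

theorem inner_map_map_eq_sq_mul_of_norm_eq {f : V →ₗ[ℝ] E} {g : V →ₗ[ℝ] F} {S : Submodule ℝ V}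
    {c : ℝ} (h : ∀ z ∈ S, ‖f z‖ = c * ‖g z‖) {z w : V} (hz : z ∈ S) (hw : w ∈ S) :
    ⟪f z, f w⟫ = c ^ 2 * ⟪g z, g w⟫ := by
  have hsq : ∀ z ∈ S, ‖f z‖ ^ 2 = c ^ 2 * ‖g z‖ ^ 2 := fun z hz => by rw [h z hz]; ring
  have hsum := hsq (z + w) (S.add_mem hz hw)
  rw [map_add, map_add, norm_add_sq_real, norm_add_sq_real, hsq z hz, hsq w hw] at hsum
  linear_combination hsum / 2

theorem LinearMap.IsSymmetric.inner_map_map_of_sq_eq {J : V →ₗ[ℝ] V} (hJ : J.IsSymmetric)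
    {a b : ℝ} (hsq : ∀ x, J (J x) = a • J x + b • x) (z w : V) :
    ⟪J z, J w⟫ = a * ⟪J z, w⟫ + b * ⟪z, w⟫ := by
  rw [hJ, hsq, inner_add_right, real_inner_smul_right, real_inner_smul_right, hJ]

end Real

theorem semiSlant_inner_relations_general
    {V : Type*} [NormedAddCommGroup V] [InnerProductSpace ℝ V] [FiniteDimensional ℝ V]
    (p q : ℕ)
    (J : V →ₗ[ℝ] V) (hJ : ∀ x : V, J (J x) = (p : ℝ) • J x + (q : ℝ) • x)
    (hcompat : ∀ x y : V, ⟪J x, y⟫ = ⟪x, J y⟫)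
    (D₁ D₂ : Submodule ℝ V)
    (horth : ∀ x ∈ D₁, ∀ y ∈ D₂, ⟪x, y⟫ = 0)
    (hinv : ∀ x ∈ D₁, J x ∈ D₁)
    (θ : ℝ)
    (hslant₂ : ∀ z ∈ D₂, ‖(Submodule.orthogonalProjection D₂ (J z) : V)‖ = Real.cos θ * ‖J z‖)
    (W : Submodule ℝ V) (hW : W = D₁ ⊔ D₂)
    (P₂ : V → V) (hP₂ : ∀ x : V, P₂ x = (Submodule.orthogonalProjection D₂ x : V))
    (T : V → V) (hT : ∀ x : V, T x = (Submodule.orthogonalProjection W (J x) : V))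
    (N : V → V) (hN : ∀ x : V, N x = (Submodule.orthogonalProjection Wᗮ (J x) : V)) :
    ∀ x ∈ W, ∀ y ∈ W,
      ⟪T (P₂ x), T (P₂ y)⟫
          = Real.cos θ ^ 2 * ((p : ℝ) * ⟪T (P₂ x), P₂ y⟫ + (q : ℝ) * ⟪P₂ x, P₂ y⟫) ∧
      ⟪N x, N y⟫
          = Real.sin θ ^ 2 * ((p : ℝ) * ⟪T (P₂ x), P₂ y⟫ + (q : ℝ) * ⟪P₂ x, P₂ y⟫) := by
  obtain rfl : P₂ = D₂.starProjection := funext hP₂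
  obtain rfl : T = fun x => W.starProjection (J x) := funext hT
  obtain rfl : N = fun x => Wᗮ.starProjection (J x) := funext hN
  subst hW
  intro x hx y hy
  have hJsymm : J.IsSymmetric := hcompat
  have hD : D₁ ⟂ D₂ := Submodule.isOrtho_iff_inner_eq.mpr horth
  have hT₂ : ∀ z ∈ D₂, (D₁ ⊔ D₂).starProjection (J z) = D₂.starProjection (J z) := fun z hz =>
    Submodule.starProjection_sup_of_mem_orthogonal hD
      (hJsymm.apply_mem_orthogonal hinv (hD.symm.le hz))
  set z := D₂.starProjection x
  set w := D₂.starProjection y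
  have hz : z ∈ D₂ := D₂.starProjection_apply_mem x
  have hw : w ∈ D₂ := D₂.starProjection_apply_mem y
  have hcos : ⟪D₂.starProjection (J z), D₂.starProjection (J w)⟫ = Real.cos θ ^ 2 * ⟪J z, J w⟫ :=
    inner_map_map_eq_sq_mul_of_norm_eq (f := D₂.starProjection.toLinearMap ∘ₗ J) hslant₂ hz hw
  have hmetallic : ⟪J z, J w⟫ = p * ⟪D₂.starProjection (J z), w⟫ + q * ⟪z, w⟫ := by
    rw [hJsymm.inner_map_map_of_sq_eq hJ, D₂.inner_starProjection_left_eq_right (J z) w,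
      Submodule.starProjection_eq_self_iff.mpr hw]
  have hpythagoras :=
    (D₁ ⊔ D₂).inner_starProjection_add_inner_starProjection_orthogonal (J z) (J w)
  simp only [hT₂ z hz, hT₂ w hw, Submodule.starProjection_orthogonal_sup_map_of_mem_sup hD hinv hx,
    Submodule.starProjection_orthogonal_sup_map_of_mem_sup hD hinv hy] at hpythagoras ⊢
  refine ⟨by rw [hcos, hmetallic], ?_⟩
  rw [Real.sin_sq]
  linear_combination hpythagoras - hcos + (1 - Real.cos θ ^ 2) * hmetallic

/-- For a semi-slant subspace `W = D₁ ⊕ D₂` (with `D₁` invariant and `D₂` slant with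
slant angle `θ`) of a compatible metallic structure `J`:
`⟪T(P₂X), T(P₂Y)⟫ = cos²θ·(p·⟪T(P₂X), P₂Y⟫ + q·⟪P₂X, P₂Y⟫)` and
`⟪NX, NY⟫ = sin²θ·(p·⟪T(P₂X), P₂Y⟫ + q·⟪P₂X, P₂Y⟫)` for all `X, Y ∈ W`. -/
theorem semiSlant_inner_relations
    {V : Type*} [NormedAddCommGroup V] [InnerProductSpace ℝ V] [FiniteDimensional ℝ V]
    (p q : ℕ) (hp : 0 < p) (hq : 0 < q)
    (J : V →ₗ[ℝ] V) (hJ : ∀ x : V, J (J x) = (p : ℝ) • J x + (q : ℝ) • x)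
    (hcompat : ∀ x y : V, ⟪J x, y⟫ = ⟪x, J y⟫)
    (D₁ D₂ : Submodule ℝ V)
    (horth : ∀ x ∈ D₁, ∀ y ∈ D₂, ⟪x, y⟫ = 0)
    (hinv : ∀ x ∈ D₁, J x ∈ D₁)
    (θ : ℝ)
    (hslant₂ : ∀ z ∈ D₂, ‖(Submodule.orthogonalProjection D₂ (J z) : V)‖ = Real.cos θ * ‖J z‖)
    (W : Submodule ℝ V) (hW : W = D₁ ⊔ D₂)
    (P₂ : V → V) (hP₂ : ∀ x : V, P₂ x = (Submodule.orthogonalProjection D₂ x : V))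
    (T : V → V) (hT : ∀ x : V, T x = (Submodule.orthogonalProjection W (J x) : V))
    (N : V → V) (hN : ∀ x : V, N x = (Submodule.orthogonalProjection Wᗮ (J x) : V)) :
    ∀ x ∈ W, ∀ y ∈ W,
      ⟪T (P₂ x), T (P₂ y)⟫
          = Real.cos θ ^ 2 * ((p : ℝ) * ⟪T (P₂ x), P₂ y⟫ + (q : ℝ) * ⟪P₂ x, P₂ y⟫) ∧
      ⟪N x, N y⟫
          = Real.sin θ ^ 2 * ((p : ℝ) * ⟪T (P₂ x), P₂ y⟫ + (q : ℝ) * ⟪P₂ x, P₂ y⟫) :=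
  semiSlant_inner_relations_general p q J hJ hcompat D₁ D₂ horth hinv θ hslant₂ W hW P₂ hP₂ T hT N
    hN
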